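/- Limit claim for the diagonal entry (first claim in the proof of Proposition 3.1): fix a meeting function ρ, a network g ∈ S, a coordinate e* ∈ E, and set w = flip e* g. Let (Fₙ) be a sequence of acceptance functions (each satisfying the parameter constraints), and write Πₙ = Π(ρ, Fₙ). Assume that as n → ∞: Fₙ w e → 0 for every e ∈ E (in particular Fₙ g e* = 1 − Fₙ w e* → 1), and Fₙ g e → 0 for every e ≠ e*. Then for every natural number τ, the diagonal entry ((Πₙ)^τ) g g converges to (1 − ρ e* g)^τ as n → ∞. -/

import Mathlib

open Matrix Finset Filter

/-- Flip the link `e` in network `g`. -/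
def flipL {E : Type*} [DecidableEq E] (e : E) (g : E → Bool) : E → Bool :=
  Function.update g e (!(g e))

/-- The one-step transition matrix of the network formation game. -/
noncomputable def netPi {E : Type*} [DecidableEq E] [Fintype E]
    (ρ : E → (E → Bool) → ℝ) (F : (E → Bool) → E → ℝ) :
    Matrix (E → Bool) (E → Bool) ℝ :=
  Matrix.of fun g w =>
    if g = w then ∑ e, ρ e g * (1 - F g e)
    else ∑ e, if w = flipL e g then ρ e g * F g e else 0

/-- A meeting function: strictly positive selection probabilities summing to one. -/
def IsMeeting {E : Type*} [Fintype E] (ρ : E → (E → Bool) → ℝ) : Prop :=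
  (∀ e g, 0 < ρ e g) ∧ ∀ g, ∑ e, ρ e g = 1

/-- An acceptance function: probabilities strictly between 0 and 1, complementary under flips. -/
def IsAcceptance {E : Type*} [DecidableEq E] (F : (E → Bool) → E → ℝ) : Prop :=
  (∀ g e, 0 < F g e ∧ F g e < 1) ∧ ∀ g e, F g e + F (flipL e g) e = 1

/-!
In the limit, rows `g` and `w = flipL e* g` of `Πₙ` become a two-state chain: from `g` it stays
with probability `1 - ρ e* g` and otherwise moves to `w`, which is absorbing. Since `Πₙ` is row
stochastic, the mass a row puts outside `{g, w}` tends to zero and bounds the contribution of every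
other state to `(Πₙ ^ (τ + 1)) x g = ∑ z, Πₙ x z * (Πₙ ^ τ) z g`. An induction on `τ` therefore
gives `(Πₙ ^ τ) g g → (1 - ρ e* g) ^ τ` together with `(Πₙ ^ τ) w g → 0`.
-/

section flipL

variable {E : Type*} [DecidableEq E]

lemma flipL_ne (e : E) (g : E → Bool) : flipL e g ≠ g := fun h => by
  simpa [flipL] using congrFun h e

lemma flipL_flipL (e : E) (g : E → Bool) : flipL e (flipL e g) = g := by
  simp [flipL]

lemma flipL_left_injective (g : E → Bool) : Function.Injective fun e => flipL e g := by
  intro e e' h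
  by_contra hne
  simpa [flipL, Function.update_of_ne hne] using congrFun h e

end flipL

section netPi

variable {E : Type*} [DecidableEq E] [Fintype E]

lemma netPi_apply_self (ρ : E → (E → Bool) → ℝ) (F : (E → Bool) → E → ℝ) (g : E → Bool) :
    netPi ρ F g g = ∑ e, ρ e g * (1 - F g e) := by
  simp [netPi]

lemma netPi_apply_flipL (ρ : E → (E → Bool) → ℝ) (F : (E → Bool) → E → ℝ) (g : E → Bool)
    (e : E) : netPi ρ F g (flipL e g) = ρ e g * F g e := by
  rw [netPi, of_apply, if_neg (flipL_ne e g).symm,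
    Finset.sum_eq_single_of_mem e (mem_univ e) fun e' _ he' =>
      if_neg fun h => he' (flipL_left_injective g h).symm, if_pos rfl]

lemma netPi_apply_self_eq_one_sub {ρ : E → (E → Bool) → ℝ} (hρ : ∀ g, ∑ e, ρ e g = 1)
    (F : (E → Bool) → E → ℝ) (g : E → Bool) : netPi ρ F g g = 1 - ∑ e, ρ e g * F g e := by
  simp only [netPi_apply_self, mul_sub, mul_one, sum_sub_distrib, hρ]

lemma sum_netPi_apply {ρ : E → (E → Bool) → ℝ} (hρ : ∀ g, ∑ e, ρ e g = 1)
    (F : (E → Bool) → E → ℝ) (g : E → Bool) :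
    ∑ w, netPi ρ F g w = 1 := by
  have hsplit : ∀ w, netPi ρ F g w = (if g = w then netPi ρ F g g else 0)
      + ∑ e, if w = flipL e g then ρ e g * F g e else 0 := by
    intro w
    rcases eq_or_ne g w with rfl | hgw
    · rw [if_pos rfl, sum_eq_zero fun e _ => if_neg (flipL_ne e g).symm, add_zero]
    · simp [netPi, hgw]
  rw [sum_congr rfl fun w _ => hsplit w, sum_add_distrib, sum_ite_eq, Finset.sum_comm]
  simp only [sum_ite_eq', mem_univ, if_true, netPi_apply_self_eq_one_sub hρ, sub_add_cancel]

lemma netPi_nonneg {ρ : E → (E → Bool) → ℝ} (hρ : ∀ e g, 0 ≤ ρ e g)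
    {F : (E → Bool) → E → ℝ} (hF : ∀ g e, F g e ∈ Set.Icc 0 1) (g w : E → Bool) :
    0 ≤ netPi ρ F g w := by
  rw [netPi, of_apply]
  split_ifs
  · exact sum_nonneg fun e _ => mul_nonneg (hρ e g) (sub_nonneg.2 (hF g e).2)
  · exact sum_nonneg fun e _ => by
      split_ifs
      exacts [mul_nonneg (hρ e g) (hF g e).1, le_rfl]

lemma netPi_mem_rowStochastic {ρ : E → (E → Bool) → ℝ} (hρ : IsMeeting ρ)
    {F : (E → Bool) → E → ℝ} (hF : ∀ g e, F g e ∈ Set.Icc 0 1) :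
    netPi ρ F ∈ rowStochastic ℝ (E → Bool) :=
  mem_rowStochastic_iff_sum.2
    ⟨netPi_nonneg (fun e g => (hρ.1 e g).le) hF, sum_netPi_apply hρ.2 F⟩

lemma tendsto_netPi_apply_self {ρ : E → (E → Bool) → ℝ} (hρ : ∀ g, ∑ e, ρ e g = 1)
    {α : Type*} {l : Filter α} {F : α → (E → Bool) → E → ℝ} {g : E → Bool} {c : E → ℝ}
    (hF : ∀ e, Tendsto (fun n => F n g e) l (nhds (c e))) :
    Tendsto (fun n => netPi ρ (F n) g g) l (nhds (1 - ∑ e, ρ e g * c e)) := by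
  simp only [netPi_apply_self_eq_one_sub hρ]
  exact tendsto_const_nhds.sub (tendsto_finsetSum _ fun e _ => (hF e).const_mul (ρ e g))

end netPi

section rowStochastic

variable {ι : Type*} [Fintype ι] [DecidableEq ι]

lemma mul_apply_sub_pair_mem_Icc {P Q : Matrix ι ι ℝ} (hP : P ∈ rowStochastic ℝ ι)
    (hQ : Q ∈ rowStochastic ℝ ι) {i j : ι} (hij : i ≠ j) (x k : ι) :
    (P * Q) x k - (P x i * Q i k + P x j * Q j k) ∈ Set.Icc 0 (1 - (P x i + P x j)) := by
  have hsub : ({i, j} : Finset ι) ⊆ univ := subset_univ _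
  have hrest : (P * Q) x k - (P x i * Q i k + P x j * Q j k)
      = ∑ z ∈ univ \ {i, j}, P x z * Q z k := by
    rw [mul_apply, ← sum_sdiff hsub, sum_pair hij, add_sub_cancel_right]
  have hmass : 1 - (P x i + P x j) = ∑ z ∈ univ \ {i, j}, P x z := by
    rw [← sum_row_of_mem_rowStochastic hP x, ← sum_sdiff hsub, sum_pair hij,
      add_sub_cancel_right]
  rw [hrest, hmass]
  exact ⟨sum_nonneg fun z _ => mul_nonneg (nonneg_of_mem_rowStochastic hP)
      (nonneg_of_mem_rowStochastic hQ),
    sum_le_sum fun z _ => mul_le_of_le_one_right (nonneg_of_mem_rowStochastic hP)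
      (le_one_of_mem_rowStochastic hQ)⟩

lemma tendsto_mul_apply_of_tendsto_pair {α : Type*} {l : Filter α}
    {P Q : α → Matrix ι ι ℝ} (hP : ∀ n, P n ∈ rowStochastic ℝ ι)
    (hQ : ∀ n, Q n ∈ rowStochastic ℝ ι) {i j x k : ι} (hij : i ≠ j) {p q u v : ℝ}
    (hpq : p + q = 1) (hPi : Tendsto (fun n => P n x i) l (nhds p))
    (hPj : Tendsto (fun n => P n x j) l (nhds q)) (hQi : Tendsto (fun n => Q n i k) l (nhds u))
    (hQj : Tendsto (fun n => Q n j k) l (nhds v)) :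
    Tendsto (fun n => (P n * Q n) x k) l (nhds (p * u + q * v)) := by
  have hmain : Tendsto (fun n => P n x i * Q n i k + P n x j * Q n j k) l
      (nhds (p * u + q * v)) := (hPi.mul hQi).add (hPj.mul hQj)
  have hmass : Tendsto (fun n => 1 - (P n x i + P n x j)) l (nhds 0) := by
    simpa [hpq] using (tendsto_const_nhds (x := (1 : ℝ))).sub (hPi.add hPj)
  have hrest : Tendsto (fun n => (P n * Q n) x k - (P n x i * Q n i k + P n x j * Q n j k)) l
      (nhds 0) :=
    tendsto_of_tendsto_of_tendsto_of_le_of_le tendsto_const_nhds hmass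
      (fun n => (mul_apply_sub_pair_mem_Icc (hP n) (hQ n) hij x k).1)
      (fun n => (mul_apply_sub_pair_mem_Icc (hP n) (hQ n) hij x k).2)
  simpa using hrest.add hmain

lemma tendsto_pow_apply_of_absorbing {α : Type*} {l : Filter α}
    {P : α → Matrix ι ι ℝ} (hP : ∀ n, P n ∈ rowStochastic ℝ ι) {x y : ι} (hxy : x ≠ y)
    {a b : ℝ} (hab : a + b = 1) (hxx : Tendsto (fun n => P n x x) l (nhds a))
    (hxy' : Tendsto (fun n => P n x y) l (nhds b)) (hyx : Tendsto (fun n => P n y x) l (nhds 0))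
    (hyy : Tendsto (fun n => P n y y) l (nhds 1)) (τ : ℕ) :
    Tendsto (fun n => (P n ^ τ) x x) l (nhds (a ^ τ)) ∧
      Tendsto (fun n => (P n ^ τ) y x) l (nhds 0) := by
  induction τ with
  | zero => simpa [one_apply, hxy.symm] using ⟨tendsto_const_nhds, tendsto_const_nhds⟩
  | succ τ ih =>
    have hPτ : ∀ n, P n ^ τ ∈ rowStochastic ℝ ι := fun n => pow_mem (hP n) τ
    simp only [pow_succ']
    constructor
    · simpa [pow_succ'] using
        tendsto_mul_apply_of_tendsto_pair hP hPτ hxy hab hxx hxy' ih.1 ih.2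
    · simpa using
        tendsto_mul_apply_of_tendsto_pair hP hPτ hxy (zero_add 1) hyx hyy ih.1 ih.2

end rowStochastic

theorem diagonal_limit_general {E : Type*} [DecidableEq E] [Fintype E]
    (ρ : E → (E → Bool) → ℝ) (hρ : IsMeeting ρ)
    (g : E → Bool) (estar : E)
    (F : ℕ → (E → Bool) → E → ℝ) (hF : ∀ n, IsAcceptance (F n))
    (hw : ∀ e : E, Tendsto (fun n => F n (flipL estar g) e) atTop (nhds 0))
    (hg : ∀ e : E, e ≠ estar → Tendsto (fun n => F n g e) atTop (nhds 0)) :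
    ∀ τ : ℕ,
      Tendsto (fun n => (netPi ρ (F n) ^ τ) g g) atTop (nhds ((1 - ρ estar g) ^ τ)) := by
  set w := flipL estar g
  have hFg : ∀ e, Tendsto (fun n => F n g e) atTop (nhds (if e = estar then 1 else 0)) := by
    intro e
    rcases eq_or_ne e estar with rfl | he
    · have hcompl : ∀ n, F n g e = 1 - F n w e := fun n => eq_sub_of_add_eq ((hF n).2 g e)
      simpa [hcompl] using (tendsto_const_nhds (x := (1 : ℝ))).sub (hw e)
    · simpa [he] using hg e he
  have hgg : Tendsto (fun n => netPi ρ (F n) g g) atTop (nhds (1 - ρ estar g)) := by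
    simpa using tendsto_netPi_apply_self hρ.2 hFg
  have hgw : Tendsto (fun n => netPi ρ (F n) g w) atTop (nhds (ρ estar g)) := by
    simpa [w, netPi_apply_flipL] using (hFg estar).const_mul (ρ estar g)
  have hwg : Tendsto (fun n => netPi ρ (F n) w g) atTop (nhds 0) := by
    rw [show g = flipL estar w from (flipL_flipL estar g).symm]
    simpa [netPi_apply_flipL] using (hw estar).const_mul (ρ estar w)
  have hww : Tendsto (fun n => netPi ρ (F n) w w) atTop (nhds 1) := by
    simpa using tendsto_netPi_apply_self hρ.2 (c := 0) hw
  have hstoch : ∀ n, netPi ρ (F n) ∈ rowStochastic ℝ (E → Bool) := fun n =>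
    netPi_mem_rowStochastic hρ fun g e => ⟨((hF n).1 g e).1.le, ((hF n).1 g e).2.le⟩
  exact fun τ => (tendsto_pow_apply_of_absorbing hstoch (flipL_ne estar g).symm
    (sub_add_cancel 1 _) hgg hgw hwg hww τ).1

/-- Limit claim for the diagonal entry (first claim in the proof of Proposition 3.1):
in the limit where all acceptance probabilities out of `w = flipL e* g` vanish and all
acceptance probabilities out of `g` except at `e*` vanish, `(Π^τ) g g → (1 - ρ e* g)^τ`. -/
theorem diagonal_limit {E : Type*} [DecidableEq E] [Fintype E] [Nonempty E]
    (ρ : E → (E → Bool) → ℝ) (hρ : IsMeeting ρ)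
    (g : E → Bool) (estar : E)
    (F : ℕ → (E → Bool) → E → ℝ) (hF : ∀ n, IsAcceptance (F n))
    (hw : ∀ e : E, Tendsto (fun n => F n (flipL estar g) e) atTop (nhds 0))
    (hg : ∀ e : E, e ≠ estar → Tendsto (fun n => F n g e) atTop (nhds 0)) :
    ∀ τ : ℕ,
      Tendsto (fun n => (netPi ρ (F n) ^ τ) g g) atTop (nhds ((1 - ρ estar g) ^ τ)) :=
  diagonal_limit_general ρ hρ g estar F hF hw hg
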